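/- arXiv:2205.04211 — 7 statements merged into one kernel-verified Lean document; each statement's English description precedes it below -/
import Mathlib

section
/- Let K be a field and T ⊆ K a proper preorder (i.e., T contains all squares, is closed under addition and multiplication, and -1 ∉ T). Then T equals the intersection of all orderings P of K (subsets with P+P ⊆ P, PP ⊆ P, P ∪ -P = K, P ∩ -P = {0}) that contain T. In particular, every proper preorder of a field extends to an ordering. -/
/-- An ordering (positive cone) of a field `K`. -/
def IsOrdering {K : Type*} [Field K] (P : Set K) : Prop :=
  (∀ a ∈ P, ∀ b ∈ P, a + b ∈ P) ∧ (∀ a ∈ P, ∀ b ∈ P, a * b ∈ P) ∧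
    (∀ a : K, a ∈ P ∨ -a ∈ P) ∧ (∀ a : K, a ∈ P → -a ∈ P → a = 0)

/-- A preorder of a field `K`: contains all squares, closed under `+` and `*`. -/
def IsPreordering {K : Type*} [Field K] (T : Set K) : Prop :=
  (∀ x : K, x ^ 2 ∈ T) ∧ (∀ a ∈ T, ∀ b ∈ T, a + b ∈ T) ∧ (∀ a ∈ T, ∀ b ∈ T, a * b ∈ T)

/-!
A proper preordering that is maximal among proper preorderings is an ordering: if neither `a`
nor `-a` lay in it, adjoining `a` would give a larger preordering `T + aT`, which stays proper
because `-1 = t₁ + a t₂` forces `-a = (1 + t₁) / t₂ ∈ T`. Zorn's lemma therefore extends every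
proper preordering to an ordering. If `a ∉ T`, the same applies to `T + (-a)T`, and the resulting
ordering contains `T` and `-a` but not `a`.
-/

section

variable {K : Type*} [Field K] {T : Set K}

namespace IsPreordering

lemma zero_mem (hT : IsPreordering T) : (0 : K) ∈ T := by
  simpa using hT.1 0

lemma one_mem (hT : IsPreordering T) : (1 : K) ∈ T := by
  simpa using hT.1 1

lemma div_mem (hT : IsPreordering T) {x y : K} (hx : x ∈ T) (hy : y ∈ T) : x / y ∈ T := by
  have hxy : x / y = x * y * y⁻¹ ^ 2 := by
    rcases eq_or_ne y 0 with rfl | hy0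
    · simp
    · field_simp
  rw [hxy]
  exact hT.2.2 _ (hT.2.2 _ hx _ hy) _ (hT.1 _)

lemma sUnion {c : Set (Set K)} (hc : ∀ P ∈ c, IsPreordering P) (hchain : IsChain (· ⊆ ·) c)
    (hne : c.Nonempty) : IsPreordering (⋃₀ c) := by
  obtain ⟨P₀, hP₀⟩ := hne
  have common {a b : K} (ha : a ∈ ⋃₀ c) (hb : b ∈ ⋃₀ c) : ∃ C ∈ c, a ∈ C ∧ b ∈ C := by
    obtain ⟨A, hA, haA⟩ := ha
    obtain ⟨B, hB, hbB⟩ := hb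
    obtain ⟨C, hC, hAC, hBC⟩ := hchain.directedOn A hA B hB
    exact ⟨C, hC, hAC haA, hBC hbB⟩
  refine ⟨fun x => ⟨P₀, hP₀, (hc P₀ hP₀).1 x⟩, fun a ha b hb => ?_, fun a ha b hb => ?_⟩
  all_goals obtain ⟨C, hC, haC, hbC⟩ := common ha hb
  · exact ⟨C, hC, (hc C hC).2.1 a haC b hbC⟩
  · exact ⟨C, hC, (hc C hC).2.2 a haC b hbC⟩

end IsPreordering

def adjoinPreordering (T : Set K) (a : K) : Set K :=
  {x | ∃ t₁ ∈ T, ∃ t₂ ∈ T, x = t₁ + a * t₂}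

lemma IsPreordering.adjoin (hT : IsPreordering T) (a : K) :
    IsPreordering (adjoinPreordering T a) := by
  have ⟨hsq, hadd, hmul⟩ := hT
  refine ⟨fun x => ⟨x ^ 2, hsq x, 0, hT.zero_mem, by ring⟩, ?_, ?_⟩
  · rintro _ ⟨t₁, ht₁, t₂, ht₂, rfl⟩ _ ⟨s₁, hs₁, s₂, hs₂, rfl⟩
    exact ⟨t₁ + s₁, hadd _ ht₁ _ hs₁, t₂ + s₂, hadd _ ht₂ _ hs₂, by ring⟩
  · rintro _ ⟨t₁, ht₁, t₂, ht₂, rfl⟩ _ ⟨s₁, hs₁, s₂, hs₂, rfl⟩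
    exact ⟨t₁ * s₁ + a ^ 2 * (t₂ * s₂),
      hadd _ (hmul _ ht₁ _ hs₁) _ (hmul _ (hsq a) _ (hmul _ ht₂ _ hs₂)),
      t₁ * s₂ + t₂ * s₁, hadd _ (hmul _ ht₁ _ hs₂) _ (hmul _ ht₂ _ hs₁), by ring⟩

lemma subset_adjoinPreordering (hT : IsPreordering T) (a : K) : T ⊆ adjoinPreordering T a :=
  fun t ht => ⟨t, ht, 0, hT.zero_mem, by ring⟩

lemma mem_adjoinPreordering_self (hT : IsPreordering T) (a : K) : a ∈ adjoinPreordering T a :=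
  ⟨0, hT.zero_mem, 1, hT.one_mem, by ring⟩

lemma neg_one_notMem_adjoinPreordering (hT : IsPreordering T) (hproper : (-1 : K) ∉ T)
    {a : K} (ha : -a ∉ T) : (-1 : K) ∉ adjoinPreordering T a := by
  rintro ⟨t₁, ht₁, t₂, ht₂, hsum⟩
  rcases eq_or_ne t₂ 0 with rfl | ht₂0
  · rw [mul_zero, add_zero] at hsum
    exact hproper (hsum ▸ ht₁)
  · have hneg : -a = (1 + t₁) / t₂ := by
      rw [eq_div_iff ht₂0]
      linear_combination hsum
    exact ha (hneg ▸ hT.div_mem (hT.2.1 _ hT.one_mem _ ht₁) ht₂)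

lemma IsOrdering.of_maximal {M : Set K}
    (hmax : Maximal (fun P : Set K => IsPreordering P ∧ (-1 : K) ∉ P) M) : IsOrdering M := by
  obtain ⟨hM, hproper⟩ := hmax.1
  have total (a : K) : a ∈ M ∨ -a ∈ M := by
    refine or_iff_not_imp_right.2 fun ha => ?_
    have hle := hmax.2 ⟨hM.adjoin a, neg_one_notMem_adjoinPreordering hM hproper ha⟩
      (subset_adjoinPreordering hM a)
    exact hle (mem_adjoinPreordering_self hM a)
  refine ⟨hM.2.1, hM.2.2, total, fun a ha hna => ?_⟩
  by_contra ha0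
  exact hproper (neg_div_self ha0 ▸ hM.div_mem hna ha)

lemma exists_isOrdering_superset (hT : IsPreordering T) (hproper : (-1 : K) ∉ T) :
    ∃ P : Set K, IsOrdering P ∧ T ⊆ P := by
  obtain ⟨M, hTM, hmax⟩ := zorn_subset_nonempty {P : Set K | IsPreordering P ∧ (-1 : K) ∉ P}
    (fun c hc hchain hne => ⟨⋃₀ c,
      ⟨IsPreordering.sUnion (fun P hP => (hc hP).1) hchain hne,
        fun ⟨P, hP, h⟩ => (hc hP).2 h⟩,
      fun _ => Set.subset_sUnion_of_mem⟩) T ⟨hT, hproper⟩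
  exact ⟨M, IsOrdering.of_maximal hmax, hTM⟩

end

/-- Every proper preorder of a field extends to an ordering, and equals the
intersection of all orderings containing it. -/
theorem stmt0 {K : Type*} [Field K] (T : Set K) (hT : IsPreordering T)
    (hproper : (-1 : K) ∉ T) :
    (∃ P : Set K, IsOrdering P ∧ T ⊆ P) ∧
      T = ⋂₀ {P : Set K | IsOrdering P ∧ T ⊆ P} := by
  refine ⟨exists_isOrdering_superset hT hproper,
    subset_antisymm (fun t ht P hP => hP.2 ht) fun a ha => ?_⟩
  by_contra haT
  obtain ⟨P, hP, hTP⟩ := exists_isOrdering_superset (hT.adjoin (-a))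
    (neg_one_notMem_adjoinPreordering hT hproper (by rwa [neg_neg]))
  have ha0 : a = 0 :=
    hP.2.2.2 a (ha P ⟨hP, (subset_adjoinPreordering hT _).trans hTP⟩)
      (hTP (mem_adjoinPreordering_self hT _))
  exact haT (ha0 ▸ hT.zero_mem)
end

section
/- If L|K is a field extension of odd degree and K is equipped with an ordering, then the ordering of K extends to an ordering of L. -/
open Polynomial Module

theorem IsOrdering.exists_linearOrder {K : Type*} [Field K] {P : Set K} (hP : IsOrdering P) :
    ∃ _ : LinearOrder K, IsStrictOrderedRing K ∧ ∀ a : K, 0 ≤ a ↔ a ∈ P := by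
  classical
  obtain ⟨hadd, hmul, htotal, hanti⟩ := hP
  have hone : (1 : K) ∈ P := (htotal 1).elim id fun h => by simpa using hmul _ h _ h
  let C : RingCone K :=
    { carrier := P
      add_mem' := fun ha hb => hadd _ ha _ hb
      zero_mem' := by simpa using htotal 0
      mul_mem' := fun ha hb => hmul _ ha _ hb
      one_mem' := hone
      eq_zero_of_mem_of_neg_mem' := fun ha hna => hanti _ ha hna }
  have : HasMemOrNegMem C := ⟨htotal⟩
  let := LinearOrder.mkOfAddGroupCone C
  have := IsOrderedRing.mkOfCone C
  exact ⟨inferInstance, inferInstance, fun a => by simp [C]⟩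

namespace RingPreordering

theorem exists_forall_le_of_isChain {R : Type*} [CommRing R] {c : Set (RingPreordering R)}
    (hc : IsChain (· ≤ ·) c) (hne : c.Nonempty) : ∃ ub : RingPreordering R, ∀ Q ∈ c, Q ≤ ub := by
  have hdir : ∀ {x y : R} {Q₁ Q₂}, Q₁ ∈ c → Q₂ ∈ c → x ∈ Q₁ → y ∈ Q₂ →
      ∃ Q ∈ c, x ∈ Q ∧ y ∈ Q := by
    intro x y Q₁ Q₂ h₁ h₂ hx hy
    rcases hc.total h₁ h₂ with h | h
    · exact ⟨Q₂, h₂, h hx, hy⟩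
    · exact ⟨Q₁, h₁, hx, h hy⟩
  refine ⟨mk' (⋃ Q ∈ c, (Q : Set R)) ?_ ?_ ?_ ?_, fun Q hQ x hx => Set.mem_biUnion hQ hx⟩
  · simp only [Set.mem_iUnion₂, SetLike.mem_coe]
    rintro x y ⟨Q₁, h₁, hx⟩ ⟨Q₂, h₂, hy⟩
    obtain ⟨Q, hQ, hx, hy⟩ := hdir h₁ h₂ hx hy
    exact ⟨Q, hQ, add_mem hx hy⟩
  · simp only [Set.mem_iUnion₂, SetLike.mem_coe]
    rintro x y ⟨Q₁, h₁, hx⟩ ⟨Q₂, h₂, hy⟩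
    obtain ⟨Q, hQ, hx, hy⟩ := hdir h₁ h₂ hx hy
    exact ⟨Q, hQ, mul_mem hx hy⟩
  · obtain ⟨Q, hQ⟩ := hne
    exact fun x => Set.mem_biUnion hQ (Q.mul_self_mem x)
  · simp only [Set.mem_iUnion₂, SetLike.mem_coe, not_exists]
    exact fun Q _ => Q.neg_one_notMem

variable {F : Type*} [Field F]

theorem exists_le_mem_of_neg_notMem (Q : RingPreordering F) {a : F} (ha : -a ∉ Q) :
    ∃ Q' : RingPreordering F, Q ≤ Q' ∧ a ∈ Q' := by
  refine ⟨mk' {z | ∃ x ∈ Q, ∃ y ∈ Q, z = x + a * y} ?_ ?_ ?_ ?_,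
    fun x hx => ⟨x, hx, 0, zero_mem Q, by ring⟩, ⟨0, zero_mem Q, 1, one_mem Q, by ring⟩⟩
  · rintro _ _ ⟨x, hx, y, hy, rfl⟩ ⟨u, hu, v, hv, rfl⟩
    exact ⟨x + u, add_mem hx hu, y + v, add_mem hy hv, by ring⟩
  · rintro _ _ ⟨x, hx, y, hy, rfl⟩ ⟨u, hu, v, hv, rfl⟩
    exact ⟨x * u + a ^ 2 * (y * v),
      add_mem (mul_mem hx hu) (mul_mem (Q.pow_two_mem a) (mul_mem hy hv)),
      x * v + y * u, add_mem (mul_mem hx hv) (mul_mem hy hu), by ring⟩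
  · exact fun x => ⟨x * x, Q.mul_self_mem x, 0, zero_mem Q, by ring⟩
  · rintro ⟨x, hx, y, hy, hxy⟩
    rcases eq_or_ne y 0 with rfl | hy0
    · exact Q.neg_one_notMem (by simpa [hxy] using hx)
    · -- `-1 = x + a y` exhibits `-a = (1 + x) y / y²` as an element of `Q`
      apply ha
      have : -a = (1 + x) * y * y⁻¹ ^ 2 := by
        field_simp
        linear_combination hxy
      rw [this]
      exact mul_mem (mul_mem (add_mem (one_mem Q) hx) hy) (Q.pow_two_mem _)

theorem mem_or_neg_mem_of_isMax {Q : RingPreordering F} (hQ : IsMax Q) (a : F) :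
    a ∈ Q ∨ -a ∈ Q := by
  by_contra! h
  obtain ⟨Q', hQQ', haQ'⟩ := Q.exists_le_mem_of_neg_notMem h.2
  exact h.1 (hQ hQQ' haQ')

theorem exists_le_isOrdering (Q : RingPreordering F) :
    ∃ O : RingPreordering F, Q ≤ O ∧ _root_.IsOrdering (O : Set F) := by
  obtain ⟨O, hQO, hO⟩ := zorn_le_nonempty_Ici₀ Q
    (fun _ _ hc P hP => exists_forall_le_of_isChain hc ⟨P, hP⟩) Q le_rfl
  exact ⟨O, hQO, fun _ hx _ hy => add_mem hx hy, fun _ hx _ hy => mul_mem hx hy,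
    mem_or_neg_mem_of_isMax hO, fun _ hx hnx => RingPreordering.eq_zero_of_mem_of_neg_mem hx hnx⟩

end RingPreordering

theorem Polynomial.exists_irreducible_odd_natDegree_dvd {K : Type*} [Field K] {h : K[X]}
    (hh : Odd h.natDegree) : ∃ r : K[X], Irreducible r ∧ Odd r.natDegree ∧ r ∣ h := by
  induction h using WfDvdMonoid.induction_on_irreducible with
  | zero => simp at hh
  | unit u hu => simp [natDegree_eq_zero_of_isUnit hu] at hh
  | mul a i ha hi ih =>
    rw [natDegree_mul hi.ne_zero ha, Nat.odd_add'] at hh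
    by_cases hodd : Odd i.natDegree
    · exact ⟨i, hi, hodd, dvd_mul_right i a⟩
    · obtain ⟨r, hr, hro, hra⟩ := ih (hh.2 (Nat.not_odd_iff_even.1 hodd))
      exact ⟨r, hr, hro, hra.mul_left i⟩

def weightedSumSq (K : Type*) [CommSemiring K] [PartialOrder K]
    (L : Type*) [CommSemiring L] [Algebra K L] : AddSubmonoid L :=
  AddSubmonoid.closure {y | ∃ p : K, 0 ≤ p ∧ ∃ x : L, y = algebraMap K L p * x ^ 2}

namespace weightedSumSq

variable {K L L' : Type*} [CommSemiring K] [PartialOrder K]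
  [CommSemiring L] [Algebra K L] [CommSemiring L'] [Algebra K L']

theorem algebraMap_mul_sq_mem {p : K} (hp : 0 ≤ p) (x : L) :
    algebraMap K L p * x ^ 2 ∈ weightedSumSq K L :=
  AddSubmonoid.subset_closure ⟨p, hp, x, rfl⟩

theorem map_mem (f : L →ₐ[K] L') {x : L} (hx : x ∈ weightedSumSq K L) :
    f x ∈ weightedSumSq K L' := by
  induction hx using AddSubmonoid.closure_induction with
  | mem _ h =>
    obtain ⟨p, hp, a, rfl⟩ := h
    simpa using algebraMap_mul_sq_mem hp (f a)
  | zero => simp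
  | add _ _ _ _ hx hy => rw [map_add]; exact add_mem hx hy

variable [IsOrderedRing K]

theorem sq_mem (x : L) : x ^ 2 ∈ weightedSumSq K L := by
  simpa using algebraMap_mul_sq_mem (K := K) zero_le_one x

theorem mul_mem {x y : L} (hx : x ∈ weightedSumSq K L) (hy : y ∈ weightedSumSq K L) :
    x * y ∈ weightedSumSq K L := by
  induction hx using AddSubmonoid.closure_induction with
  | mem _ h =>
    obtain ⟨p, hp, a, rfl⟩ := h
    induction hy using AddSubmonoid.closure_induction with
    | mem _ h =>
      obtain ⟨q, hq, b, rfl⟩ := h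
      convert algebraMap_mul_sq_mem (mul_nonneg hp hq) (a * b) using 1
      rw [map_mul]; ring
    | zero => simp
    | add _ _ _ _ hx hy => rw [mul_add]; exact add_mem hx hy
  | zero => simp
  | add _ _ _ _ hx hy => rw [add_mul]; exact add_mem hx hy

end weightedSumSq

section OrderedRing

variable {K : Type*} [CommRing K] [LinearOrder K] [IsStrictOrderedRing K]

theorem Polynomial.even_natDegree_and_leadingCoeff_pos_of_mem_weightedSumSq {q : K[X]}
    (hq : q ∈ weightedSumSq K K[X]) (hq0 : q ≠ 0) : Even q.natDegree ∧ 0 < q.leadingCoeff := by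
  induction hq using AddSubmonoid.closure_induction with
  | mem _ h =>
    obtain ⟨p, hp, g, rfl⟩ := h
    have hp0 : p ≠ 0 := by rintro rfl; simp at hq0
    have hg0 : g ≠ 0 := by rintro rfl; simp at hq0
    rw [algebraMap_eq, natDegree_C_mul hp0, natDegree_pow, leadingCoeff_mul, leadingCoeff_C,
      leadingCoeff_pow]
    exact ⟨even_two_mul _,
      mul_pos (hp.lt_of_ne' hp0) (pow_two_pos_of_ne_zero (leadingCoeff_ne_zero.2 hg0))⟩
  | zero => exact absurd rfl hq0
  | add a b _ _ iha ihb =>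
    rcases eq_or_ne a 0 with rfl | ha0
    · simpa using ihb (by simpa using hq0)
    rcases eq_or_ne b 0 with rfl | hb0
    · simpa using iha (by simpa using hq0)
    obtain ⟨hae, hal⟩ := iha ha0
    obtain ⟨hbe, hbl⟩ := ihb hb0
    rcases lt_trichotomy a.degree b.degree with h | h | h
    · rw [natDegree_add_eq_right_of_degree_lt h, leadingCoeff_add_of_degree_lt h]
      exact ⟨hbe, hbl⟩
    · have hlc : 0 < a.leadingCoeff + b.leadingCoeff := add_pos hal hbl
      have hdeg : (a + b).degree = a.degree := by
        rw [degree_add_eq_of_leadingCoeff_add_ne_zero hlc.ne', h, max_self]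
      rw [natDegree_eq_of_degree_eq hdeg, leadingCoeff_add_of_degree_eq h hlc.ne']
      exact ⟨hae, hlc⟩
    · rw [natDegree_add_eq_left_of_degree_lt h, leadingCoeff_add_of_degree_lt' h]
      exact ⟨hae, hal⟩

theorem Polynomial.neg_one_notMem_weightedSumSq : (-1 : K[X]) ∉ weightedSumSq K K[X] := by
  intro h
  have := (even_natDegree_and_leadingCoeff_pos_of_mem_weightedSumSq h (by simp)).2
  rw [leadingCoeff_neg, leadingCoeff_one] at this
  linarith

end OrderedRing

section OrderedField

variable {K : Type*} [Field K] [LinearOrder K]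

theorem AdjoinRoot.exists_mem_weightedSumSq_natDegree_lt_mk_eq {f : K[X]} (hf : 0 < f.natDegree)
    {x : AdjoinRoot f} (hx : x ∈ weightedSumSq K (AdjoinRoot f)) :
    ∃ q ∈ weightedSumSq K K[X], q.natDegree < 2 * f.natDegree ∧ mk f q = x := by
  induction hx using AddSubmonoid.closure_induction with
  | mem _ h =>
    obtain ⟨p, hp, z, rfl⟩ := h
    obtain ⟨g, rfl⟩ := mk_surjective z
    have hgf : (g % f).natDegree < f.natDegree := by
      rcases eq_or_ne (g % f) 0 with h0 | h0
      · simpa [h0] using hf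
      · exact natDegree_lt_natDegree h0 (degree_mod_lt g (ne_zero_of_natDegree_gt hf))
    refine ⟨C p * (g % f) ^ 2, weightedSumSq.algebraMap_mul_sq_mem hp _, ?_, ?_⟩
    · calc (C p * (g % f) ^ 2).natDegree ≤ 2 * (g % f).natDegree :=
            natDegree_C_mul_le _ _ |>.trans natDegree_pow_le
        _ < 2 * f.natDegree := by omega
    · rw [map_mul, map_pow, mk_C, algebraMap_eq]
      congr 2
      exact mk_eq_mk.2 ⟨-(g / f), by rw [EuclideanDomain.mod_eq_sub_mul_div]; ring⟩
  | zero => exact ⟨0, zero_mem _, by simpa using hf, map_zero _⟩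
  | add _ _ _ _ ha hb =>
    obtain ⟨q₁, hq₁, hd₁, rfl⟩ := ha
    obtain ⟨q₂, hq₂, hd₂, rfl⟩ := hb
    exact ⟨q₁ + q₂, add_mem hq₁ hq₂, (natDegree_add_le _ _).trans_lt (max_lt hd₁ hd₂),
      map_add _ _ _⟩

variable [IsStrictOrderedRing K]

theorem AdjoinRoot.neg_one_notMem_weightedSumSq {f : K[X]} (hf : Irreducible f)
    (hodd : Odd f.natDegree) : (-1 : AdjoinRoot f) ∉ weightedSumSq K (AdjoinRoot f) := by
  induction hn : f.natDegree using Nat.strong_induction_on generalizing f with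
  | _ n ih =>
  intro hmem
  obtain ⟨q, hq, hqdeg, hqf⟩ :=
    exists_mem_weightedSumSq_natDegree_lt_mk_eq (hn ▸ hodd.pos) hmem
  have hS : q + 1 ∈ weightedSumSq K K[X] :=
    add_mem hq (by simpa using weightedSumSq.sq_mem (K := K) (1 : K[X]))
  have hS0 : q + 1 ≠ 0 := fun h =>
    Polynomial.neg_one_notMem_weightedSumSq (eq_neg_of_add_eq_zero_left h ▸ hq)
  obtain ⟨hSe, -⟩ := even_natDegree_and_leadingCoeff_pos_of_mem_weightedSumSq hS hS0
  obtain ⟨h, hfh⟩ : f ∣ q + 1 := mk_eq_zero.1 (by simp [hqf])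
  have hh0 : h ≠ 0 := by rintro rfl; exact hS0 (by simpa using hfh)
  have hdeg : (q + 1).natDegree = n + h.natDegree := by
    rw [hfh, natDegree_mul hf.ne_zero hh0, hn]
  -- `q + 1` has even degree `< 2n`, so its cofactor `h` has odd degree `< n`
  have hho : Odd h.natDegree := by
    rw [hdeg, Nat.even_add] at hSe
    exact Nat.not_even_iff_odd.1 fun he => Nat.not_even_iff_odd.2 (hn ▸ hodd) (hSe.2 he)
  have hhn : h.natDegree < n := by
    have := (natDegree_add_le q 1).trans_lt (max_lt (hn ▸ hqdeg) (by simp; omega))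
    omega
  obtain ⟨r, hr, hro, hrh⟩ := exists_irreducible_odd_natDegree_dvd hho
  refine ih r.natDegree ((natDegree_le_of_dvd hrh hh0).trans_lt hhn) hr hro rfl ?_
  have hrq : mk r q = -1 := by
    have : mk r (q + 1) = 0 := mk_eq_zero.2 (hrh.trans (hfh ▸ dvd_mul_left h f))
    rwa [map_add, map_one, add_eq_zero_iff_eq_neg] at this
  exact hrq ▸ weightedSumSq.map_mem (mkₐ r) hq

theorem neg_one_notMem_weightedSumSq_of_odd_finrank {L : Type*} [Field L] [Algebra K L]
    (hodd : Odd (finrank K L)) : (-1 : L) ∉ weightedSumSq K L := by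
  have : FiniteDimensional K L := Module.finite_of_finrank_pos hodd.pos
  let pb := Field.powerBasisOfFiniteOfSeparable K L
  have hirr : Irreducible (minpoly K pb.gen) := minpoly.irreducible pb.isIntegral_gen
  intro h
  apply AdjoinRoot.neg_one_notMem_weightedSumSq hirr (by rwa [pb.natDegree_minpoly, ← pb.finrank])
  have := weightedSumSq.map_mem
    (pb.lift (AdjoinRoot.root _) (by rw [AdjoinRoot.aeval_eq, AdjoinRoot.mk_self])) h
  rwa [map_neg, map_one] at this

theorem exists_isOrdering_algebraMap_mem_of_odd_finrank (L : Type*) [Field L] [Algebra K L]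
    (hodd : Odd (finrank K L)) :
    ∃ Q : Set L, IsOrdering Q ∧ ∀ a : K, 0 ≤ a → algebraMap K L a ∈ Q := by
  let T : RingPreordering L := .mk' (weightedSumSq K L : Set L) add_mem weightedSumSq.mul_mem
    (fun x => by simpa [sq] using weightedSumSq.sq_mem (K := K) x)
    (neg_one_notMem_weightedSumSq_of_odd_finrank hodd)
  obtain ⟨O, hTO, hO⟩ := T.exists_le_isOrdering
  exact ⟨O, hO, fun a ha =>
    hTO (by simpa [T] using weightedSumSq.algebraMap_mul_sq_mem ha (1 : L))⟩

end OrderedField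

/-- If `L|K` is a field extension of odd degree, every ordering of `K` extends to `L`. -/
theorem stmt4 {K L : Type*} [Field K] [Field L] [Algebra K L]
    (hodd : Odd (Module.finrank K L)) (P : Set K) (hP : IsOrdering P) :
    ∃ Q : Set L, IsOrdering Q ∧ ∀ a ∈ P, algebraMap K L a ∈ Q := by
  obtain ⟨_, _, hnonneg⟩ := hP.exists_linearOrder
  obtain ⟨Q, hQ, hPQ⟩ := exists_isOrdering_algebraMap_mem_of_odd_finrank L hodd
  exact ⟨Q, hQ, fun a ha => hPQ a ((hnonneg a).2 ha)⟩
end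

section
/- Let R be a real closed field and f ∈ R[X] a real-rooted polynomial (all roots of f in R(i) lie in R). Then the number of positive roots of f counted with multiplicity equals exactly the number of sign changes in the coefficients of f. -/
/-- A (linearly ordered) field is real closed if every nonnegative element is a
square and every polynomial of odd degree has a root. -/
def IsRealClosed' (R : Type*) [Field R] [LinearOrder R] [IsStrictOrderedRing R] : Prop :=
  (∀ x : R, 0 ≤ x → ∃ y : R, y ^ 2 = x) ∧
    ∀ f : Polynomial R, Odd f.natDegree → ∃ x : R, f.eval x = 0

/-- The number of positive roots of a polynomial, counted with multiplicity. -/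
noncomputable def posRootMult {R : Type*} [Field R] [LinearOrder R] [IsStrictOrderedRing R]
    (f : Polynomial R) : ℕ :=
  Multiset.card (f.roots.filter fun a => 0 < a)

/-- The number of sign changes in the sequence of nonzero coefficients of a
polynomial, ordered by increasing degree. -/
noncomputable def signChanges {R : Type*} [Field R] [LinearOrder R] [IsStrictOrderedRing R]
    (f : Polynomial R) : ℕ :=
  let c : List R := (f.support.sort (· ≤ ·)).map f.coeff
  (c.zip c.tail).countP fun p => decide (SignType.sign p.1 ≠ SignType.sign p.2)

/-!
Descartes' bound (number of positive roots ≤ number of sign changes) holds for every polynomial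
over an ordered field; applied to `f` and to `f(-X)` it bounds the positive and the negative roots.
Conversely, two consecutive nonzero terms `a Xᵉ` and `b Xᵈ` give a sign change both in `f` and in
`f(-X)` only if `d - e` is even, hence at least `2`, so the sign changes of `f` and `f(-X)` together
are at most `deg f - ord₀ f`. For a split polynomial this is the number of nonzero roots, so both
Descartes bounds are equalities.
-/

open Polynomial

theorem List.countP_zip_tail_append_pair {α : Type*} (p : α × α → Bool) (l : List α) (x y : α) :
    ((l ++ [x, y]).zip (l ++ [x, y]).tail).countP p
      = ((l ++ [x]).zip (l ++ [x]).tail).countP p + if p (x, y) then 1 else 0 := by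
  induction l with
  | nil => simp [List.countP_cons]
  | cons a l ih =>
    cases l with
    | nil => simp [List.countP_cons, add_comm]
    | cons b l =>
      simp only [List.cons_append, List.tail_cons, List.zip_cons_cons, List.countP_cons] at ih ⊢
      omega

theorem Multiset.countP_pos_add_countP_neg_add_count_zero {α : Type*} [Zero α] [LinearOrder α]
    (s : Multiset α) : s.countP (0 < ·) + s.countP (· < 0) + s.count 0 = Multiset.card s := by
  induction s using Multiset.induction_on with
  | empty => simp
  | cons a s ih =>
    simp only [Multiset.countP_cons, Multiset.count_cons, Multiset.card_cons]
    split_ifs <;> first | omega | order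

section OrderedRing

variable {R : Type*} [Ring R] [LinearOrder R] [IsStrictOrderedRing R] {x y : R}

theorem sign_ne_sign_iff_mul_neg (hx : x ≠ 0) (hy : y ≠ 0) :
    SignType.sign x ≠ SignType.sign y ↔ x * y < 0 := by
  rcases hx.lt_or_gt with hx | hx <;> rcases hy.lt_or_gt with hy | hy <;>
    simp [sign_neg, sign_pos, mul_neg_iff, hx, hy, hx.not_gt, hy.not_gt]

theorem sign_eq_neg_sign_iff_mul_neg (hx : x ≠ 0) :
    SignType.sign x = -SignType.sign y ↔ x * y < 0 := by
  rcases eq_or_ne y 0 with rfl | hy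
  · simpa using hx
  rw [← sign_ne_sign_iff_mul_neg hx hy]
  rcases hx.lt_or_gt with hx | hx <;> rcases hy.lt_or_gt with hy | hy <;>
    simp [sign_neg, sign_pos, hx, hy]

end OrderedRing

theorem ite_mul_neg_add_ite_neg_one_pow_mul_neg_add_le {R : Type*} [CommRing R] [LinearOrder R]
    [IsStrictOrderedRing R] (a b : R) {d e : ℕ} (hed : e < d) :
    (if a * b < 0 then 1 else 0) + (if (-1) ^ d * a * ((-1) ^ e * b) < 0 then 1 else 0) + e
      ≤ d := by
  rw [show (-1) ^ d * a * ((-1) ^ e * b) = (-1) ^ (d + e) * (a * b) by ring]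
  rcases Nat.even_or_odd (d + e) with ⟨k, hk⟩ | hodd
  · rw [Even.neg_one_pow ⟨k, hk⟩, one_mul]
    split_ifs <;> omega
  · rw [hodd.neg_one_pow, neg_one_mul]
    split_ifs <;> first | omega | linarith

namespace Polynomial

section Semiring

variable {R : Type*} [Semiring R]

theorem eraseLead_induction {motive : R[X] → Prop} (zero : motive 0)
    (step : ∀ P : R[X], P ≠ 0 → motive P.eraseLead → motive P) (P : R[X]) : motive P := by
  induction hn : P.support.card using Nat.strong_induction_on generalizing P with
  | _ n ih =>
    rcases eq_or_ne P 0 with rfl | hP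
    · exact zero
    exact step P hP (ih _ (hn ▸ eraseLead_support_card_lt hP) _ rfl)

theorem sort_support_eq_sort_support_eraseLead_append {P : R[X]} (hP : P ≠ 0) :
    P.support.sort (· ≤ ·) = P.eraseLead.support.sort (· ≤ ·) ++ [P.natDegree] := by
  refine List.Perm.eq_of_pairwise' (Finset.pairwise_sort _ _) ?_ ?_
  · refine List.pairwise_append.2 ⟨Finset.pairwise_sort _ _, by simp, ?_⟩
    simp only [List.mem_singleton]
    rintro a ha b rfl
    exact (lt_natDegree_of_mem_eraseLead_support ((Finset.mem_sort _).1 ha)).le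
  · rw [List.perm_ext_iff_of_nodup (Finset.sort_nodup _ _)]
    · intro a
      by_cases ha : a = P.natDegree
      · simp [ha, natDegree_mem_support_of_nonzero hP]
      · simp [eraseLead_support, ha]
    · refine List.nodup_append.2 ⟨Finset.sort_nodup _ _, by simp, ?_⟩
      simp only [List.mem_singleton]
      rintro a ha b rfl
      exact ne_natDegree_of_mem_eraseLead_support ((Finset.mem_sort _).1 ha)

noncomputable def nonzeroCoeffs (P : R[X]) : List R :=
  (P.support.sort (· ≤ ·)).map P.coeff

@[simp]
theorem nonzeroCoeffs_zero : (0 : R[X]).nonzeroCoeffs = [] := by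
  simp [nonzeroCoeffs]

theorem nonzeroCoeffs_eq_eraseLead_append {P : R[X]} (hP : P ≠ 0) :
    P.nonzeroCoeffs = P.eraseLead.nonzeroCoeffs ++ [P.leadingCoeff] := by
  rw [nonzeroCoeffs, sort_support_eq_sort_support_eraseLead_append hP, List.map_append,
    nonzeroCoeffs, List.map_singleton, coeff_natDegree]
  congr 1
  refine List.map_congr_left fun i hi => (eraseLead_coeff_of_ne i ?_).symm
  exact ne_natDegree_of_mem_eraseLead_support ((Finset.mem_sort _).1 hi)

end Semiring

theorem natDegree_comp_neg_X {R : Type*} [Ring R] (P : R[X]) :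
    (P.comp (-X)).natDegree = P.natDegree :=
  natDegree_eq_of_degree_eq degree_comp_neg_X

theorem eraseLead_comp_neg_X {R : Type*} [CommRing R] (P : R[X]) :
    (P.comp (-X)).eraseLead = P.eraseLead.comp (-X) := by
  rw [← self_sub_monomial_natDegree_leadingCoeff, ← self_sub_monomial_natDegree_leadingCoeff,
    sub_comp, natDegree_comp_neg_X, comp_neg_X_leadingCoeff_eq, monomial_comp,
    ← C_mul_X_pow_eq_monomial, neg_pow]
  simp only [map_mul, map_pow, map_neg, map_one]
  ring

section OrderedCommRing

variable {R : Type*} [CommRing R] [LinearOrder R] [IsStrictOrderedRing R]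

theorem signVariations_eq_signVariations_eraseLead_add_ite {P : R[X]} (hP : P ≠ 0) :
    P.signVariations = P.eraseLead.signVariations +
      if P.leadingCoeff * P.eraseLead.leadingCoeff < 0 then 1 else 0 := by
  simp only [signVariations_eq_eraseLead_add_ite hP,
    sign_eq_neg_sign_iff_mul_neg (leadingCoeff_ne_zero.2 hP)]

theorem signVariations_add_signVariations_comp_neg_X_add_le {P : R[X]} (hP : P ≠ 0) {k : ℕ}
    (hk : ∀ i < k, P.coeff i = 0) :
    P.signVariations + (P.comp (-X)).signVariations + k ≤ P.natDegree := by
  induction P using eraseLead_induction with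
  | zero => exact absurd rfl hP
  | step P _ ih =>
    have hk_le : k ≤ P.natDegree := not_lt.1 fun h => hP (leadingCoeff_eq_zero.1 (hk _ h))
    rw [signVariations_eq_signVariations_eraseLead_add_ite hP,
      signVariations_eq_signVariations_eraseLead_add_ite (comp_neg_X_eq_zero_iff.not.2 hP),
      eraseLead_comp_neg_X, comp_neg_X_leadingCoeff_eq, comp_neg_X_leadingCoeff_eq]
    rcases eq_or_ne P.eraseLead 0 with hE | hE
    · simpa [hE] using hk_le
    have hlt := (eraseLead_natDegree_lt_or_eraseLead_eq_zero P).resolve_right hE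
    have := ih hE fun i hi => by simp [eraseLead_coeff, hk i hi]
    have := ite_mul_neg_add_ite_neg_one_pow_mul_neg_add_le P.leadingCoeff
      P.eraseLead.leadingCoeff hlt
    omega

end OrderedCommRing

end Polynomial

section OrderedField

variable {R : Type*} [Field R] [LinearOrder R] [IsStrictOrderedRing R]

theorem signChanges_eq_countP_nonzeroCoeffs (P : R[X]) :
    signChanges P = (P.nonzeroCoeffs.zip P.nonzeroCoeffs.tail).countP
      fun p => decide (SignType.sign p.1 ≠ SignType.sign p.2) := rfl

theorem signChanges_eq_signChanges_eraseLead_add_ite {P : R[X]} (hP : P ≠ 0) :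
    signChanges P = signChanges P.eraseLead +
      if P.leadingCoeff * P.eraseLead.leadingCoeff < 0 then 1 else 0 := by
  rcases eq_or_ne P.eraseLead 0 with hE | hE
  · simp [signChanges_eq_countP_nonzeroCoeffs, nonzeroCoeffs_eq_eraseLead_append hP, hE]
  rw [signChanges_eq_countP_nonzeroCoeffs, signChanges_eq_countP_nonzeroCoeffs,
    nonzeroCoeffs_eq_eraseLead_append hP, nonzeroCoeffs_eq_eraseLead_append hE,
    List.append_assoc, List.singleton_append, List.countP_zip_tail_append_pair, mul_comm]
  simp [sign_ne_sign_iff_mul_neg (leadingCoeff_ne_zero.2 hE) (leadingCoeff_ne_zero.2 hP)]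

theorem signChanges_eq_signVariations (P : R[X]) : signChanges P = P.signVariations := by
  induction P using eraseLead_induction with
  | zero => simp [signChanges_eq_countP_nonzeroCoeffs]
  | step P hP ih =>
    rw [signChanges_eq_signChanges_eraseLead_add_ite hP, ih,
      signVariations_eq_signVariations_eraseLead_add_ite hP]

end OrderedField

theorem stmt11_general {R : Type*} [Field R] [LinearOrder R] [IsStrictOrderedRing R]
    (f : Polynomial R) (hf : f.Splits) :
    posRootMult f = signChanges f := by
  rcases eq_or_ne f 0 with rfl | hf0
  · simp [posRootMult, signChanges_eq_signVariations]
  have hpos : posRootMult f = f.roots.countP (0 < ·) := (Multiset.countP_eq_card_filter _ _).symm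
  have hpos_le := roots_countP_pos_le_signVariations f
  have hneg_le : f.roots.countP (· < 0) ≤ (f.comp (-X)).signVariations := by
    simpa only [roots_comp_neg_X, Multiset.countP_map, Function.comp_def, neg_pos,
      ← Multiset.countP_eq_card_filter] using roots_countP_pos_le_signVariations (f.comp (-X))
  have hzero : f.roots.count 0 = f.natTrailingDegree := by
    rw [count_roots, rootMultiplicity_eq_natTrailingDegree']
  have hroots := f.roots.countP_pos_add_countP_neg_add_count_zero
  have hdeg := hf.natDegree_eq_card_roots
  have hsigns := signVariations_add_signVariations_comp_neg_X_add_le hf0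
    fun i hi => coeff_eq_zero_of_lt_natTrailingDegree hi
  rw [signChanges_eq_signVariations]
  omega

/-- Descartes' rule of signs is exact for real-rooted polynomials: if `f` splits
over the real closed field `R`, then the number of positive roots of `f` counted
with multiplicity equals the number of sign changes in its coefficients. -/
theorem stmt11 {R : Type*} [Field R] [LinearOrder R] [IsStrictOrderedRing R] (hR : IsRealClosed' R)
    (f : Polynomial R) (hf : f.Splits) :
    posRootMult f = signChanges f :=
  stmt11_general f hf
end

section
/- (Cassels) Let (K, ≤) be an ordered field, f₁,...,f_ℓ ∈ K[X], g₁,...,g_ℓ ∈ K[X]∖{0}, and a₁,...,a_ℓ ∈ K with aᵢ ≥ 0, such that Σᵢ aᵢ(fᵢ/gᵢ)² is a polynomial in K[X]. Then there exist p₁,...,p_ℓ ∈ K[X] with Σᵢ aᵢ(fᵢ/gᵢ)² = Σᵢ aᵢpᵢ². -/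
/-!
Cassels' descent. Clearing denominators gives `h * g ^ 2 = ∑ aᵢ Fᵢ ²` with `g ≠ 0`; we induct on
`deg g`. Divide `Fᵢ = g qᵢ + rᵢ` with `deg rᵢ < deg g`. If `∑ aᵢ rᵢ ² = 0`, nonnegativity of the
weights forces `aᵢ rᵢ = 0`, and `g ^ 2` cancels, leaving `h = ∑ aᵢ qᵢ ²`. Otherwise
`∑ aᵢ rᵢ ² = g g₁` with `g₁ ≠ 0` and `deg g₁ < deg g`, and the second intersection of the line
through `(F, g)` and `(q, 1)` with the quadric `h T ² = ∑ aᵢ Xᵢ ²` is a point with last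
coordinate `g₁`, so the induction hypothesis applies.
-/

open Polynomial Finset

section Identities

variable {R ι : Type*} [CommRing R] [Fintype ι] (c F q : ι → R) (g h : R)

theorem sum_mul_mul_add_mul_sq (x y : R) :
    ∑ i, c i * (x * F i + y * q i) ^ 2 =
      x ^ 2 * ∑ i, c i * F i ^ 2 + 2 * x * y * ∑ i, c i * (F i * q i) +
        y ^ 2 * ∑ i, c i * q i ^ 2 := by
  simp only [mul_sum, ← sum_add_distrib]
  exact sum_congr rfl fun i _ => by ring

/-- `(casselsNum, casselsDenom) = (S - h) • (F, g) + 2 (h g - B) • (q, 1)`, where `S = ∑ cᵢ qᵢ ²`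
and `B = ∑ cᵢ Fᵢ qᵢ`: the second intersection point of the line through `(F, g)` and `(q, 1)`
with the quadric `h T ² = ∑ cᵢ Xᵢ ²`. -/
def casselsDenom : R :=
  h * g - 2 * ∑ i, c i * (F i * q i) + g * ∑ i, c i * q i ^ 2

def casselsNum (i : ι) : R :=
  (∑ j, c j * q j ^ 2 - h) * F i + 2 * (h * g - ∑ j, c j * (F j * q j)) * q i

variable {c F g h}

theorem sum_mul_sub_mul_sq_eq_mul_casselsDenom (hF : h * g ^ 2 = ∑ i, c i * F i ^ 2) :
    ∑ i, c i * (F i - g * q i) ^ 2 = g * casselsDenom c F q g h := by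
  have := sum_mul_mul_add_mul_sq c F q 1 (-g)
  simp only [one_mul, neg_mul, ← sub_eq_add_neg] at this
  rw [this, ← hF, casselsDenom]
  ring

theorem mul_casselsDenom_sq_eq_sum (hF : h * g ^ 2 = ∑ i, c i * F i ^ 2) :
    h * casselsDenom c F q g h ^ 2 = ∑ i, c i * casselsNum c F q g h i ^ 2 := by
  simp only [casselsNum, casselsDenom, sum_mul_mul_add_mul_sq, ← hF]
  ring

end Identities

theorem degree_sum_C_mul_sq_lt {R ι : Type*} [Semiring R] (s : Finset ι) (c : ι → R)
    {g : R[X]} (hg : g ≠ 0) {r : ι → R[X]} (hr : ∀ i ∈ s, (r i).degree < g.degree) :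
    (∑ i ∈ s, C (c i) * r i ^ 2).degree < g.degree + g.degree := by
  have hbot : ⊥ < g.degree + g.degree := by
    rw [bot_lt_iff_ne_bot, Ne, WithBot.add_eq_bot, not_or]
    exact ⟨degree_ne_bot.mpr hg, degree_ne_bot.mpr hg⟩
  refine (degree_sum_le _ _).trans_lt ((Finset.sup_lt_iff hbot).mpr fun i hi => ?_)
  obtain hri | hri := eq_or_ne (r i) 0
  · simpa [hri] using hbot
  calc (C (c i) * r i ^ 2).degree ≤ (C (c i)).degree + (r i ^ 2).degree := degree_mul_le _ _
    _ ≤ 0 + 2 • (r i).degree := add_le_add degree_C_le (degree_pow_le _ 2)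
    _ = (r i).degree + (r i).degree := by rw [zero_add, two_nsmul]
    _ < g.degree + g.degree :=
        WithBot.add_lt_add_of_lt_of_le (degree_ne_bot.mpr hri) (hr i hi) (hr i hi).le

section WeightedSumSq

variable {K ι : Type*} [Field K] [Fintype ι] {a : ι → K}

theorem exists_natDegree_lt_of_sum_C_mul_sq_mod_ne_zero {g h : K[X]} (hg : g ≠ 0)
    {F : ι → K[X]} (hF : h * g ^ 2 = ∑ i, C (a i) * F i ^ 2)
    (hr : ∑ i, C (a i) * (F i % g) ^ 2 ≠ 0) :
    ∃ g₁ ≠ 0, g₁.natDegree < g.natDegree ∧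
      ∃ F₁ : ι → K[X], h * g₁ ^ 2 = ∑ i, C (a i) * F₁ i ^ 2 := by
  set g₁ := casselsDenom (fun i => C (a i)) F (fun i => F i / g) g h
  have hg₁ : ∑ i, C (a i) * (F i % g) ^ 2 = g * g₁ := by
    simp only [EuclideanDomain.mod_eq_sub_mul_div]
    exact sum_mul_sub_mul_sq_eq_mul_casselsDenom _ hF
  have hg₁0 : g₁ ≠ 0 := by
    rintro h0
    exact hr (by rw [hg₁, h0, mul_zero])
  have hdeg : g.degree + g₁.degree < g.degree + g.degree := by
    rw [← degree_mul, ← hg₁]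
    exact degree_sum_C_mul_sq_lt _ _ hg fun i _ => degree_mod_lt _ hg
  refine ⟨g₁, hg₁0, natDegree_lt_natDegree hg₁0 ?_, _, mul_casselsDenom_sq_eq_sum _ hF⟩
  exact (WithBot.add_lt_add_iff_left (degree_ne_bot.mpr hg)).mp hdeg

variable [LinearOrder K] [IsStrictOrderedRing K]

theorem C_mul_eq_zero_of_sum_C_mul_sq_eq_zero (ha : ∀ i, 0 ≤ a i) {r : ι → K[X]}
    (hr : ∑ i, C (a i) * r i ^ 2 = 0) (i : ι) : C (a i) * r i = 0 := by
  refine Polynomial.funext fun x => ?_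
  have hx : ∑ j, a j * (r j).eval x ^ 2 = 0 := by
    simpa [eval_finsetSum] using congrArg (eval x) hr
  have hi := (sum_eq_zero_iff_of_nonneg fun j _ => mul_nonneg (ha j) (sq_nonneg _)).mp hx i
    (mem_univ i)
  simpa [sq, ← mul_assoc] using hi

theorem eq_sum_C_mul_sq_div_of_sum_C_mul_sq_mod_eq_zero (ha : ∀ i, 0 ≤ a i) {g h : K[X]}
    (hg : g ≠ 0) {F : ι → K[X]} (hF : h * g ^ 2 = ∑ i, C (a i) * F i ^ 2)
    (hr : ∑ i, C (a i) * (F i % g) ^ 2 = 0) : h = ∑ i, C (a i) * (F i / g) ^ 2 := by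
  have hterm (i : ι) : C (a i) * F i ^ 2 = g ^ 2 * (C (a i) * (F i / g) ^ 2) := by
    have hmod := C_mul_eq_zero_of_sum_C_mul_sq_eq_zero ha hr i
    calc C (a i) * F i ^ 2 = C (a i) * (g * (F i / g) + F i % g) ^ 2 := by
          rw [EuclideanDomain.div_add_mod]
      _ = g ^ 2 * (C (a i) * (F i / g) ^ 2) +
            C (a i) * (F i % g) * (2 * g * (F i / g) + F i % g) := by ring
      _ = g ^ 2 * (C (a i) * (F i / g) ^ 2) := by rw [hmod, zero_mul, add_zero]
  refine mul_right_cancel₀ (pow_ne_zero 2 hg) ?_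
  rw [hF, sum_congr rfl fun i _ => hterm i, ← mul_sum, mul_comm]

theorem exists_eq_sum_C_mul_sq_of_mul_sq_eq (ha : ∀ i, 0 ≤ a i) {g h : K[X]} (hg : g ≠ 0)
    {F : ι → K[X]} (hF : h * g ^ 2 = ∑ i, C (a i) * F i ^ 2) :
    ∃ p : ι → K[X], h = ∑ i, C (a i) * p i ^ 2 := by
  induction hn : g.natDegree using Nat.strong_induction_on generalizing g F with
  | _ n ih =>
  by_cases hr : ∑ i, C (a i) * (F i % g) ^ 2 = 0
  · exact ⟨_, eq_sum_C_mul_sq_div_of_sum_C_mul_sq_mod_eq_zero ha hg hF hr⟩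
  · obtain ⟨g₁, hg₁, hlt, F₁, hF₁⟩ := exists_natDegree_lt_of_sum_C_mul_sq_mod_ne_zero hg hF hr
    exact ih _ (hn ▸ hlt) hg₁ hF₁ rfl

end WeightedSumSq

theorem mul_prod_sq_eq_sum_of_algebraMap_eq {R L ι : Type*} [CommRing R] [IsDomain R] [Field L]
    [Algebra R L] [IsFractionRing R L] [Fintype ι] [DecidableEq ι] {f g c : ι → R}
    (hg : ∀ i, g i ≠ 0) {h : R}
    (hsum : algebraMap R L h =
      ∑ i, algebraMap R L (c i) * (algebraMap R L (f i) / algebraMap R L (g i)) ^ 2) :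
    h * (∏ i, g i) ^ 2 = ∑ i, c i * (f i * ∏ j ∈ univ.erase i, g j) ^ 2 := by
  refine IsFractionRing.injective R L ?_
  simp only [map_mul, map_pow, map_sum, hsum, sum_mul]
  refine sum_congr rfl fun i hi => ?_
  have hgi : algebraMap R L (g i) ≠ 0 :=
    (map_ne_zero_iff _ (IsFractionRing.injective R L)).mpr (hg i)
  rw [← mul_prod_erase _ _ hi, map_mul]
  field_simp

/-- Cassels' theorem: if a weighted sum of squares of rational functions (with
nonnegative weights from an ordered field) is a polynomial, then it is a weighted
sum of squares of polynomials with the same weights. -/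
theorem stmt14 {K : Type*} [Field K] [LinearOrder K] [IsStrictOrderedRing K] (l : ℕ)
    (f g : Fin l → Polynomial K) (hg : ∀ i, g i ≠ 0) (a : Fin l → K)
    (ha : ∀ i, 0 ≤ a i) (h : Polynomial K)
    (hsum : algebraMap (Polynomial K) (RatFunc K) h =
      ∑ i, algebraMap (Polynomial K) (RatFunc K) (Polynomial.C (a i)) *
        (algebraMap (Polynomial K) (RatFunc K) (f i) /
          algebraMap (Polynomial K) (RatFunc K) (g i)) ^ 2) :
    ∃ p : Fin l → Polynomial K, h = ∑ i, Polynomial.C (a i) * p i ^ 2 :=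
  exists_eq_sum_C_mul_sq_of_mul_sq_eq ha (prod_ne_zero_iff.mpr fun i _ => hg i)
    (mul_prod_sq_eq_sum_of_algebraMap_eq hg hsum)
end

section
/- The Motzkin polynomial f = X⁴Y² + X²Y⁴ - 3X²Y² + 1 ∈ ℝ[X,Y] is nonnegative on ℝ² but is not a sum of squares of polynomials in ℝ[X,Y]. -/
/-!
Nonnegativity of the Motzkin polynomial `M` is AM-GM for `x⁴y², x²y⁴, 1`, made explicit by
the identity `M = (|x||y|)²(|x| - |y|)² + (|x||y| - 1)²(2|x||y| + 1)`.

For the second part view `M` in `ℝ[x][y]` as `x²y⁴ + (x⁴ - 3x²)y² + 1`. Over a formally real ring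
the leading coefficients of the squares in a sum of squares cannot cancel, so in `M = ∑ qᵢ²` every
`qᵢ = aᵢ + bᵢy + cᵢy²` with `∑ aᵢ² = 1`, `∑ cᵢ² = x²` and `∑ (2aᵢcᵢ + bᵢ²) = x⁴ - 3x²`. Hence the
`aᵢ` are constants, the `cᵢ` are multiples of `x` and the `bᵢ` vanish at `0`, so comparing the
coefficients of `x²` in the last identity gives `∑ bᵢ'(0)² = -3`.
-/

open MvPolynomial

/-- The Motzkin polynomial `X⁴Y² + X²Y⁴ - 3X²Y² + 1`. -/
noncomputable def motzkin : MvPolynomial (Fin 2) ℝ :=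
  X 0 ^ 4 * X 1 ^ 2 + X 0 ^ 2 * X 1 ^ 4 - C 3 * X 0 ^ 2 * X 1 ^ 2 + 1

theorem IsSumSq.exists_eq_sum_sq {R : Type*} [CommSemiring R] {t : R} (ht : IsSumSq t) :
    ∃ (n : ℕ) (x : Fin n → R), t = ∑ i, x i ^ 2 := by
  induction ht with
  | zero => exact ⟨0, Fin.elim0, by simp⟩
  | sq_add a _ ih =>
    obtain ⟨n, x, rfl⟩ := ih
    exact ⟨n + 1, Fin.cons a x, by simp [Fin.sum_univ_succ, sq]⟩

namespace IsFormallyReal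

theorem of_sum_sq_eq_zero {R : Type*} [CommSemiring R]
    (h : ∀ (n : ℕ) (x : Fin n → R), ∑ i, x i ^ 2 = 0 → ∀ i, x i = 0) : IsFormallyReal R :=
  of_eq_zero_of_eq_zero_of_mul_self_add fun {t a} ht hat ↦ by
    obtain ⟨n, x, rfl⟩ := ht.exists_eq_sum_sq
    exact h (n + 1) (Fin.cons a x) (by simpa [Fin.sum_univ_succ, sq] using hat) 0

theorem eq_zero_of_sum_sq_eq_zero {R ι : Type*} [CommRing R] [IsFormallyReal R]
    {s : Finset ι} {x : ι → R} (h : ∑ i ∈ s, x i ^ 2 = 0) {i : ι} (hi : i ∈ s) : x i = 0 := by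
  classical
  rw [← Finset.add_sum_erase s _ hi] at h
  exact eq_zero_of_pow_eq_zero <|
    eq_zero_of_add_right (IsSquare.sq _).isSumSq (IsSumSq.sum_sq _ x) h

end IsFormallyReal

namespace Polynomial

section FormallyReal

variable {R ι : Type*} [CommRing R] [IsFormallyReal R]

theorem two_mul_natDegree_le_natDegree_sum_sq {s : Finset ι} (p : ι → R[X])
    {i : ι} (hi : i ∈ s) : 2 * (p i).natDegree ≤ (∑ j ∈ s, p j ^ 2).natDegree := by
  obtain ⟨k, hk, hmax⟩ := s.exists_max_image (fun j ↦ (p j).natDegree) ⟨i, hi⟩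
  set D := (p k).natDegree
  suffices hD : D = 0 ∨ 2 * D ≤ (∑ j ∈ s, p j ^ 2).natDegree by
    have := hmax i hi
    omega
  refine or_iff_not_imp_left.2 fun hD0 ↦ le_natDegree_of_ne_zero fun hcoeff ↦ ?_
  have : (p k).coeff D = 0 := by
    refine IsFormallyReal.eq_zero_of_sum_sq_eq_zero (x := fun j ↦ (p j).coeff D) ?_ hk
    rw [← hcoeff, finsetSum_coeff]
    exact Finset.sum_congr rfl fun j hj ↦ (coeff_pow_of_natDegree_le (hmax j hj)).symm
  exact hD0 (by simp_all [D])

instance isFormallyReal : IsFormallyReal R[X] :=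
  .of_sum_sq_eq_zero fun n p hp i ↦ by
    have hdeg : (p i).natDegree = 0 := by
      simpa [hp] using two_mul_natDegree_le_natDegree_sum_sq p (Finset.mem_univ i)
    rw [eq_C_of_natDegree_eq_zero hdeg, C_eq_zero]
    refine IsFormallyReal.eq_zero_of_sum_sq_eq_zero (x := fun j ↦ (p j).coeff 0) ?_
      (Finset.mem_univ i)
    simpa [coeff_zero_eq_eval_zero, eval_finsetSum] using congr_arg (eval 0) hp

end FormallyReal

theorem coeff_sq_two {R : Type*} [CommSemiring R] (p : R[X]) :
    (p ^ 2).coeff 2 = 2 * p.coeff 0 * p.coeff 2 + p.coeff 1 ^ 2 := by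
  rw [sq, coeff_mul, Finset.Nat.sum_antidiagonal_eq_sum_range_succ_mk]
  simp [Finset.sum_range_succ]
  ring

theorem sum_two_mul_add_sq_ne_motzkin_coeff {ι : Type*} {s : Finset ι} {a b c : ι → ℝ[X]}
    (ha : ∑ i ∈ s, a i ^ 2 = 1) (hc : ∑ i ∈ s, c i ^ 2 = X ^ 2) :
    ∑ i ∈ s, (2 * a i * c i + b i ^ 2) ≠ X ^ 4 - 3 * X ^ 2 := by
  intro hb
  have ha_deg (i) (hi : i ∈ s) : (a i).natDegree = 0 := by
    simpa [ha] using two_mul_natDegree_le_natDegree_sum_sq a hi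
  have hc_deg (i) (hi : i ∈ s) : (c i).natDegree ≤ 1 := by
    have := two_mul_natDegree_le_natDegree_sum_sq c hi
    rw [hc, natDegree_X_pow] at this
    omega
  have hc0 (i) (hi : i ∈ s) : (c i).coeff 0 = 0 :=
    IsFormallyReal.eq_zero_of_sum_sq_eq_zero (x := fun i ↦ (c i).coeff 0)
      (by simpa [coeff_zero_eq_eval_zero, eval_finsetSum] using congr_arg (eval 0) hc) hi
  have hb0 (i) (hi : i ∈ s) : (b i).coeff 0 = 0 := by
    refine IsFormallyReal.eq_zero_of_sum_sq_eq_zero (x := fun i ↦ (b i).coeff 0) ?_ hi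
    calc ∑ i ∈ s, (b i).coeff 0 ^ 2 = ∑ i ∈ s, (2 * a i * c i + b i ^ 2).coeff 0 :=
          Finset.sum_congr rfl fun i hi ↦ by simp [sq, mul_coeff_zero, hc0 i hi]
      _ = 0 := by rw [← finsetSum_coeff, hb]; simp
  have hb1 : ∑ i ∈ s, (b i).coeff 1 ^ 2 = -3 := by
    calc ∑ i ∈ s, (b i).coeff 1 ^ 2 = ∑ i ∈ s, (2 * a i * c i + b i ^ 2).coeff 2 := by
          refine Finset.sum_congr rfl fun i hi ↦ ?_
          rw [coeff_add, coeff_sq_two, hb0 i hi, eq_C_of_natDegree_eq_zero (ha_deg i hi),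
            mul_comm 2, mul_assoc, coeff_C_mul, coeff_ofNat_mul,
            coeff_eq_zero_of_natDegree_lt (p := c i) (n := 2) (by have := hc_deg i hi; omega)]
          ring
      _ = -3 := by rw [← finsetSum_coeff, hb]; simp [coeff_X_pow]
  have := Finset.sum_nonneg fun i (_ : i ∈ s) ↦ sq_nonneg ((b i).coeff 1)
  linarith

theorem sum_sq_ne_motzkin_bivariate {ι : Type*} (s : Finset ι) (Q : ι → ℝ[X][X]) :
    ∑ i ∈ s, Q i ^ 2 ≠ C (X ^ 2) * X ^ 4 + C (X ^ 4 - 3 * X ^ 2) * X ^ 2 + 1 := by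
  intro hQ
  have hdeg (i) (hi : i ∈ s) : (Q i).natDegree ≤ 2 := by
    have := two_mul_natDegree_le_natDegree_sum_sq Q hi
    have : (∑ i ∈ s, Q i ^ 2).natDegree ≤ 4 := by rw [hQ]; compute_degree
    omega
  have hcoeff (k : ℕ) := congr_arg (coeff · k) hQ
  simp only [finsetSum_coeff, coeff_add, coeff_C_mul_X_pow, coeff_one] at hcoeff
  refine sum_two_mul_add_sq_ne_motzkin_coeff (s := s) (a := fun i ↦ (Q i).coeff 0)
    (b := fun i ↦ (Q i).coeff 1) (c := fun i ↦ (Q i).coeff 2) ?_ ?_ ?_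
  · simpa [coeff_zero_eq_eval_zero] using hcoeff 0
  · have hsq (i) (hi : i ∈ s) : (Q i ^ 2).coeff 4 = (Q i).coeff 2 ^ 2 :=
      coeff_pow_of_natDegree_le (hdeg i hi)
    simpa [Finset.sum_congr rfl hsq] using hcoeff 4
  · simpa [coeff_sq_two] using hcoeff 2

end Polynomial

theorem eval_motzkin_nonneg (v : Fin 2 → ℝ) : 0 ≤ eval v motzkin := by
  have h : eval v motzkin = (|v 0| * |v 1|) ^ 2 * (|v 0| - |v 1|) ^ 2 +
      (|v 0| * |v 1| - 1) ^ 2 * (2 * |v 0| * |v 1| + 1) := by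
    simp only [motzkin, map_add, map_sub, map_mul, map_pow, eval_X, eval_C, map_one]
    rw [show v 0 ^ 4 = (v 0 ^ 2) ^ 2 by ring, show v 1 ^ 4 = (v 1 ^ 2) ^ 2 by ring,
      ← sq_abs (v 0), ← sq_abs (v 1)]
    ring
  rw [h]
  positivity

/-- The Motzkin polynomial is nonnegative on `ℝ²` but is not a sum of squares of
polynomials. -/
theorem stmt15 :
    (∀ v : Fin 2 → ℝ, 0 ≤ eval v motzkin) ∧
      ¬ ∃ (n : ℕ) (p : Fin n → MvPolynomial (Fin 2) ℝ), motzkin = ∑ i, p i ^ 2 := by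
  refine ⟨eval_motzkin_nonneg, ?_⟩
  rintro ⟨n, p, hp⟩
  let φ : MvPolynomial (Fin 2) ℝ →ₐ[ℝ] Polynomial (Polynomial ℝ) :=
    aeval ![Polynomial.C Polynomial.X, Polynomial.X]
  apply Polynomial.sum_sq_ne_motzkin_bivariate Finset.univ (φ ∘ p)
  simp only [Function.comp_apply, ← map_pow, ← map_sum, ← hp]
  simp [φ, motzkin, map_ofNat]
  ring
end

section
/- Let K be a field and f, g ∈ K[X₁,...,Xₙ]. Then the Newton polytope of fg equals the Minkowski sum of the Newton polytopes of f and g: N(fg) = N(f) + N(g). -/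
/-!
Every point of `N(f) + N(g)` is a convex combination of its vertices, so it suffices to see that
each vertex `v` is an exponent of `fg`. A vertex of a Minkowski sum splits in only one way as
`p + q` with `p ∈ N(f)`, `q ∈ N(g)`; since `v` is also a sum of exponents `α` of `f` and `β` of
`g`, the monomial `X^(α+β)` arises in exactly one way in the product, and its coefficient
`f_α g_β` is nonzero because `K` has no zero divisors.
-/

open Pointwise

/-- The Newton polytope of a multivariate polynomial: the convex hull in `ℝⁿ` of
the exponent vectors of its nonzero terms. -/
noncomputable def newtonPolytope {K : Type*} [CommSemiring K] {n : ℕ}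
    (f : MvPolynomial (Fin n) K) : Set (Fin n → ℝ) :=
  convexHull ℝ ((fun α : Fin n →₀ ℕ => fun i => (α i : ℝ)) ''
    (f.support : Set (Fin n →₀ ℕ)))

theorem eq_and_eq_of_add_eq_of_mem_extremePoints_add {𝕜 E : Type*} [Field 𝕜] [LinearOrder 𝕜]
    [IsStrictOrderedRing 𝕜] [AddCommGroup E] [Module 𝕜 E] {P Q : Set E} {p p' q q' : E}
    (hv : p + q ∈ (P + Q).extremePoints 𝕜) (hp : p ∈ P) (hp' : p' ∈ P) (hq : q ∈ Q)
    (hq' : q' ∈ Q) (h : p' + q' = p + q) : p' = p ∧ q' = q := by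
  -- `p + q` is the midpoint of `p + q'` and `p' + q`.
  have hmid : p + q ∈ openSegment 𝕜 (p + q') (p' + q) := by
    refine ⟨1 / 2, 1 / 2, by norm_num, by norm_num, by norm_num, ?_⟩
    calc (1 / 2 : 𝕜) • (p + q') + (1 / 2 : 𝕜) • (p' + q)
        = (1 / 2 : 𝕜) • ((p + q) + (p' + q')) := by module
      _ = p + q := by rw [h]; module
  obtain ⟨h₁, h₂⟩ := (mem_extremePoints.mp hv).2 _ (Set.add_mem_add hp hq') _
    (Set.add_mem_add hp' hq) hmid
  exact ⟨add_right_cancel h₂, add_left_cancel h₁⟩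

theorem Set.Finite.convexHull_extremePoints_convexHull {E : Type*} [AddCommGroup E]
    [Module ℝ E] [TopologicalSpace E] [T2Space E] [IsTopologicalAddGroup E] [ContinuousSMul ℝ E]
    [LocallyConvexSpace ℝ E] {s : Set E} (hs : s.Finite) :
    convexHull ℝ ((convexHull ℝ s).extremePoints ℝ) = convexHull ℝ s := by
  have hext : ((convexHull ℝ s).extremePoints ℝ).Finite :=
    hs.subset extremePoints_convexHull_subset
  rw [← (hext.isClosed_convexHull (𝕜 := ℝ)).closure_eq]
  exact closure_convexHull_extremePoints (hs.isCompact_convexHull (𝕜 := ℝ))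
    (convex_convexHull ℝ s)

section ExponentVector

variable {σ : Type*}

noncomputable def exponentVector : (σ →₀ ℕ) →+ (σ → ℝ) where
  toFun α i := α i
  map_zero' := by ext; simp
  map_add' α β := by ext; simp

theorem exponentVector_injective : Function.Injective (exponentVector (σ := σ)) :=
  fun _ _ h ↦ Finsupp.ext fun i ↦ Nat.cast_injective (congrFun h i)

end ExponentVector

section NewtonPolytope

variable {K : Type*} [CommSemiring K] {n : ℕ}

theorem newtonPolytope_eq_convexHull (f : MvPolynomial (Fin n) K) :
    newtonPolytope f = convexHull ℝ (exponentVector '' (f.support : Set (Fin n →₀ ℕ))) :=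
  rfl

theorem newtonPolytope_add_newtonPolytope (f g : MvPolynomial (Fin n) K) :
    newtonPolytope f + newtonPolytope g =
      convexHull ℝ (exponentVector '' ((f.support + g.support : Finset (Fin n →₀ ℕ)) :
        Set (Fin n →₀ ℕ))) := by
  rw [newtonPolytope_eq_convexHull, newtonPolytope_eq_convexHull, Finset.coe_add,
    Set.image_add, convexHull_add]

theorem newtonPolytope_mul_subset (f g : MvPolynomial (Fin n) K) :
    newtonPolytope (f * g) ⊆ newtonPolytope f + newtonPolytope g := by
  classical
  rw [newtonPolytope_add_newtonPolytope, newtonPolytope_eq_convexHull]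
  exact convexHull_mono (Set.image_mono (by exact_mod_cast MvPolynomial.support_mul f g))

theorem uniqueAdd_of_mem_extremePoints_newtonPolytope_add
    {f g : MvPolynomial (Fin n) K} {α β : Fin n →₀ ℕ} (hα : α ∈ f.support) (hβ : β ∈ g.support)
    (hv : exponentVector (α + β) ∈ (newtonPolytope f + newtonPolytope g).extremePoints ℝ) :
    UniqueAdd f.support g.support α β := by
  intro a b ha hb hab
  have mem {h : MvPolynomial (Fin n) K} {γ : Fin n →₀ ℕ} (hγ : γ ∈ h.support) :
      exponentVector γ ∈ newtonPolytope h :=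
    subset_convexHull ℝ _ ⟨γ, hγ, rfl⟩
  rw [map_add] at hv
  have hsplit := eq_and_eq_of_add_eq_of_mem_extremePoints_add hv (mem hα) (mem ha) (mem hβ)
    (mem hb) (by rw [← map_add, hab, map_add])
  exact ⟨exponentVector_injective hsplit.1, exponentVector_injective hsplit.2⟩

theorem extremePoints_newtonPolytope_add_subset [NoZeroDivisors K]
    (f g : MvPolynomial (Fin n) K) :
    (newtonPolytope f + newtonPolytope g).extremePoints ℝ ⊆
      exponentVector '' ((f * g).support : Set (Fin n →₀ ℕ)) := by
  intro v hv
  obtain ⟨γ, hγ, rfl⟩ := extremePoints_convexHull_subset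
    (newtonPolytope_add_newtonPolytope f g ▸ hv)
  obtain ⟨α, hα, β, hβ, rfl⟩ := Finset.mem_add.mp hγ
  have hcoeff : (f * g).coeff (α + β) = f.coeff α * g.coeff β :=
    AddMonoidAlgebra.coeff_mul_add_of_uniqueAdd
      (uniqueAdd_of_mem_extremePoints_newtonPolytope_add hα hβ hv)
  refine ⟨α + β, ?_, rfl⟩
  rw [Finset.mem_coe, MvPolynomial.mem_support_iff, hcoeff]
  exact mul_ne_zero (MvPolynomial.mem_support_iff.mp hα) (MvPolynomial.mem_support_iff.mp hβ)

end NewtonPolytope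

/-- The Newton polytope of a product is the Minkowski sum of the Newton polytopes. -/
theorem stmt16 {K : Type*} [Field K] {n : ℕ} (f g : MvPolynomial (Fin n) K) :
    newtonPolytope (f * g) = newtonPolytope f + newtonPolytope g := by
  refine (newtonPolytope_mul_subset f g).antisymm ?_
  have hfin : (exponentVector '' ((f.support + g.support : Finset (Fin n →₀ ℕ)) :
      Set (Fin n →₀ ℕ))).Finite := (Finset.finite_toSet _).image _
  calc newtonPolytope f + newtonPolytope g
      = convexHull ℝ ((newtonPolytope f + newtonPolytope g).extremePoints ℝ) := by
        rw [newtonPolytope_add_newtonPolytope, hfin.convexHull_extremePoints_convexHull]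
    _ ⊆ newtonPolytope (f * g) :=
        convexHull_mono (extremePoints_newtonPolytope_add_subset f g)
end

section
/- (Abstract Positivstellensatz) Let A be a commutative ring, T ⊆ A a preorder, and a ∈ A. Then â > 0 on Sper(A, T) (i.e., a ∈ P∖(-P) for every prime cone P ⊇ T) if and only if there exists t ∈ T with t·a ∈ 1 + T. -/
/-!
If `t * a = 1 + t'` with `t, t' ∈ T`, then `-a` cannot lie in a prime cone `P ⊇ T`, for otherwise
`-1 = t * (-a) + t' ∈ P`. Conversely, if no such `t, t'` exist, then `-1 ∉ T - a T`, which is a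
preordering containing `T` and `-a`. By Zorn's lemma it extends to a maximal preordering `M` with
`-1 ∉ M`, and a maximal one is a prime cone: for `x ∉ M` maximality forces `-1 ∈ M + x M`, and
multiplying two such relations for `x, y ∉ M` shows `-(x * y) ∉ M`. So `M` is a prime cone
containing `T` and `-a`.
-/

/-- A preorder of a commutative ring `A`: contains all squares and is closed under
addition and multiplication. -/
def IsRingPreordering {A : Type*} [CommRing A] (T : Set A) : Prop :=
  (∀ a : A, a ^ 2 ∈ T) ∧ (∀ a ∈ T, ∀ b ∈ T, a + b ∈ T) ∧ (∀ a ∈ T, ∀ b ∈ T, a * b ∈ T)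

/-- A prime cone of a commutative ring `A`. -/
def IsPrimeCone {A : Type*} [CommRing A] (P : Set A) : Prop :=
  (∀ a ∈ P, ∀ b ∈ P, a + b ∈ P) ∧ (∀ a ∈ P, ∀ b ∈ P, a * b ∈ P) ∧
    (∀ a : A, a ∈ P ∨ -a ∈ P) ∧ (-1 : A) ∉ P ∧
    ∀ a b : A, a * b ∈ P → a ∈ P ∨ -b ∈ P

section

variable {A : Type*} [CommRing A]

def IsProperRingPreordering (T : Set A) : Prop :=
  IsRingPreordering T ∧ (-1 : A) ∉ T

/-- `T + x T`, the preordering generated by `T` and `x` when `T` is a preordering. -/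
def preorderingAdjoin (T : Set A) (x : A) : Set A :=
  {y | ∃ s ∈ T, ∃ t ∈ T, y = s + x * t}

namespace IsRingPreordering

variable {T : Set A}

theorem zero_mem (hT : IsRingPreordering T) : (0 : A) ∈ T := by
  simpa using hT.1 0

theorem one_mem (hT : IsRingPreordering T) : (1 : A) ∈ T := by
  simpa using hT.1 1

theorem subset_preorderingAdjoin (hT : IsRingPreordering T) (x : A) :
    T ⊆ preorderingAdjoin T x :=
  fun y hy => ⟨y, hy, 0, hT.zero_mem, by ring⟩

theorem mem_preorderingAdjoin_self (hT : IsRingPreordering T) (x : A) :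
    x ∈ preorderingAdjoin T x :=
  ⟨0, hT.zero_mem, 1, hT.one_mem, by ring⟩

theorem preorderingAdjoin (hT : IsRingPreordering T) (x : A) :
    IsRingPreordering (preorderingAdjoin T x) := by
  have hsub := hT.subset_preorderingAdjoin x
  obtain ⟨sq, add, mul⟩ := hT
  refine ⟨fun b => hsub (sq b), ?_, ?_⟩
  · rintro _ ⟨s, hs, t, ht, rfl⟩ _ ⟨s', hs', t', ht', rfl⟩
    exact ⟨s + s', add _ hs _ hs', t + t', add _ ht _ ht', by ring⟩
  · rintro _ ⟨s, hs, t, ht, rfl⟩ _ ⟨s', hs', t', ht', rfl⟩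
    exact ⟨s * s' + x ^ 2 * (t * t'), add _ (mul _ hs _ hs') _ (mul _ (sq x) _ (mul _ ht _ ht')),
      s * t' + t * s', add _ (mul _ hs _ ht') _ (mul _ ht _ hs'), by ring⟩

theorem sUnion_of_isChain {c : Set (Set A)} (hc : ∀ S ∈ c, IsRingPreordering S)
    (hchain : IsChain (· ⊆ ·) c) (hne : c.Nonempty) : IsRingPreordering (⋃₀ c) := by
  obtain ⟨S₀, hS₀⟩ := hne
  have closed {op : A → A → A} (h : ∀ S ∈ c, ∀ x ∈ S, ∀ y ∈ S, op x y ∈ S) :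
      ∀ x ∈ ⋃₀ c, ∀ y ∈ ⋃₀ c, op x y ∈ ⋃₀ c := by
    rintro x ⟨S₁, hS₁, hx⟩ y ⟨S₂, hS₂, hy⟩
    rcases hchain.total hS₁ hS₂ with h12 | h21
    · exact ⟨S₂, hS₂, h S₂ hS₂ x (h12 hx) y hy⟩
    · exact ⟨S₁, hS₁, h S₁ hS₁ x hx y (h21 hy)⟩
  exact ⟨fun b => ⟨S₀, hS₀, (hc S₀ hS₀).1 b⟩, closed fun S hS => (hc S hS).2.1,
    closed fun S hS => (hc S hS).2.2⟩

end IsRingPreordering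

theorem IsProperRingPreordering.exists_maximal {T : Set A} (hT : IsProperRingPreordering T) :
    ∃ M, T ⊆ M ∧ Maximal IsProperRingPreordering M := by
  refine zorn_subset_nonempty {S | IsProperRingPreordering S} (fun c hc hchain hne => ?_) T hT
  refine ⟨⋃₀ c, ⟨.sUnion_of_isChain (fun S hS => (hc hS).1) hchain hne, ?_⟩,
    fun S hS => Set.subset_sUnion_of_mem hS⟩
  rintro ⟨S, hS, h⟩
  exact (hc hS).2 h

namespace Maximal

variable {M : Set A}

theorem neg_one_mem_preorderingAdjoin (hM : Maximal IsProperRingPreordering M) {x : A}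
    (hx : x ∉ M) : (-1 : A) ∈ preorderingAdjoin M x := by
  by_contra h
  exact hx (hM.2 ⟨hM.1.1.preorderingAdjoin x, h⟩ (hM.1.1.subset_preorderingAdjoin x)
    (hM.1.1.mem_preorderingAdjoin_self x))

theorem mem_or_mem_of_neg_mul_mem (hM : Maximal IsProperRingPreordering M) {x y : A}
    (hxy : -(x * y) ∈ M) : x ∈ M ∨ y ∈ M := by
  by_contra! h
  obtain ⟨⟨_, add, mul⟩, hM1⟩ := hM.1
  obtain ⟨s, hs, t, ht, hx⟩ := hM.neg_one_mem_preorderingAdjoin h.1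
  obtain ⟨s', hs', t', ht', hy⟩ := hM.neg_one_mem_preorderingAdjoin h.2
  -- `(1 + s) (1 + s') = x y t t'`
  have key : s + s' + s * s' + -(x * y) * (t * t') = -1 := by
    linear_combination (-(1 + s')) * hx + (x * t) * hy
  exact hM1 (key ▸ add _ (add _ (add _ hs _ hs') _ (mul _ hs _ hs')) _
    (mul _ hxy _ (mul _ ht _ ht')))

theorem isPrimeCone (hM : Maximal IsProperRingPreordering M) : IsPrimeCone M := by
  obtain ⟨⟨sq, add, mul⟩, hM1⟩ := hM.1
  refine ⟨add, mul, fun b => hM.mem_or_mem_of_neg_mul_mem ?_, hM1,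
    fun b c hbc => hM.mem_or_mem_of_neg_mul_mem ?_⟩
  · simpa [pow_two] using sq b
  · simpa using hbc

end Maximal

theorem IsPrimeCone.neg_notMem_of_mul_eq {P : Set A} (hP : IsPrimeCone P) {a t t' : A}
    (ht : t ∈ P) (ht' : t' ∈ P) (h : t * a = 1 + t') : -a ∉ P := by
  intro ha
  have key : t * -a + t' = -1 := by linear_combination -h
  exact hP.2.2.2.1 (key ▸ hP.1 _ (hP.2.1 _ ht _ ha) _ ht')

end

/-- Abstract Positivstellensatz: `â > 0` on `Sper(A,T)` iff `t·a ∈ 1 + T` for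
some `t ∈ T`. -/
theorem stmt18 {A : Type*} [CommRing A] (T : Set A) (hT : IsRingPreordering T)
    (a : A) :
    (∀ P : Set A, IsPrimeCone P → T ⊆ P → a ∈ P ∧ -a ∉ P) ↔
      ∃ t ∈ T, ∃ t' ∈ T, t * a = 1 + t' := by
  refine ⟨fun hpos => ?_, fun ⟨t, ht, t', ht', h⟩ P hP hTP => ?_⟩
  · by_contra! hne
    have hproper : IsProperRingPreordering (preorderingAdjoin T (-a)) := by
      refine ⟨hT.preorderingAdjoin (-a), ?_⟩
      rintro ⟨s, hs, t, ht, h⟩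
      exact hne t ht s hs (by linear_combination h)
    obtain ⟨M, hsub, hM⟩ := hproper.exists_maximal
    have hTM : T ⊆ M := (hT.subset_preorderingAdjoin (-a)).trans hsub
    exact (hpos M hM.isPrimeCone hTM).2 (hsub (hT.mem_preorderingAdjoin_self (-a)))
  · have hna := hP.neg_notMem_of_mul_eq (hTP ht) (hTP ht') h
    exact ⟨(hP.2.2.1 a).resolve_right hna, hna⟩
end
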